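/- arXiv:2203.03427 — 2 statements merged into one kernel-verified Lean document; each statement's English description precedes it below -/
import Mathlib

section
/- Let G be a finite group such that every maximal subgroup of G is an ICΦ-subgroup of G. Then G is nilpotent. -/
/-!
Let `M` be a maximal subgroup of `G`. Modulo `[M,G]` the subgroup `M` is central, and either `M`
is normal with cyclic quotient `G/M` or `M[M,G] = G`; in both cases `G/[M,G]` is abelian, so
`G' ≤ [M,G]`. If `G` is perfect, every maximal `M` therefore lies in `Φ(M)`, which forces `M = 1`
and then `G = G' ≤ [1,G] = 1`: a perfect group has no maximal subgroups. Otherwise some maximal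
`U ≥ G'` exists; it is normal, and `G' ≤ U ∩ [U,G] ≤ Φ(U) ≤ Φ(G)` by Gaschütz's lemma. So every
maximal subgroup contains `G'`, hence is normal, and the finite group `G` is nilpotent.
-/

/-- `H` is an `ICΦ`-subgroup of `G` if `H ∩ [H,G] ≤ Φ(H)`. -/
def IsICPhi {G : Type*} [Group G] (H : Subgroup G) : Prop :=
  H ⊓ ⁅H, (⊤ : Subgroup G)⁆ ≤ (frattini ↥H).map H.subtype

open Subgroup
open scoped commutatorElement

namespace Subgroup

variable {G : Type*} [Group G]

theorem commutator_top_normal (H : Subgroup G) : ⁅H, (⊤ : Subgroup G)⁆.Normal := by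
  refine ⟨fun n hn g => ?_⟩
  have hconj : ⁅H, (⊤ : Subgroup G)⁆.map (MulAut.conj g).toMonoidHom ≤ ⁅H, ⊤⁆ := by
    rw [map_commutator, commutator_le]
    rintro _ ⟨h, hh, rfl⟩ x -
    have : ⁅(MulAut.conj g).toMonoidHom h, x⁆ = ⁅h, g⁆⁻¹ * ⁅h, x * g⁆ := by
      simp only [MulEquiv.coe_toMonoidHom, MulAut.conj_apply, commutatorElement_def]
      group
    rw [this]
    exact mul_mem (inv_mem (commutator_mem_commutator hh (mem_top g)))
      (commutator_mem_commutator hh (mem_top (x * g)))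
  exact hconj ⟨n, hn, rfl⟩

theorem commutator_top_le_iff_le_upperCentralSeriesStep {H K : Subgroup G} [K.Normal] :
    ⁅H, (⊤ : Subgroup G)⁆ ≤ K ↔ H ≤ upperCentralSeriesStep K := by
  rw [commutator_le]
  exact ⟨fun h x hx y => h x hx y (mem_top y), fun h x hx y _ => h hx y⟩

theorem isCyclic_quotient_of_isCoatom {M : Subgroup G} [M.Normal] (hM : IsCoatom M) :
    IsCyclic (G ⧸ M) := by
  obtain ⟨g, -, hg⟩ := SetLike.exists_of_lt hM.lt_top
  have hlt : M < (zpowers (g : G ⧸ M)).comap (QuotientGroup.mk' M) := by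
    refine lt_of_le_of_ne ?_ fun h => hg (h ▸ mem_zpowers (g : G ⧸ M))
    simpa using MonoidHom.ker_le_comap (QuotientGroup.mk' M) (zpowers (g : G ⧸ M))
  refine isCyclic_iff_exists_zpowers_eq_top.mpr ⟨g, ?_⟩
  rw [← map_comap_eq_self_of_surjective (QuotientGroup.mk'_surjective M) (zpowers _),
    hM.2 _ hlt, ← MonoidHom.range_eq_map, MonoidHom.range_eq_top]
  exact QuotientGroup.mk'_surjective M

theorem commutator_le_of_isCyclic_quotient {K N : Subgroup G} [K.Normal] [N.Normal]
    [IsCyclic (G ⧸ N)] (hKN : K ≤ N) (hN : N ≤ upperCentralSeriesStep K) :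
    _root_.commutator G ≤ K := by
  rw [← Normal.quotient_commutative_iff_commutator_le]
  refine (QuotientGroup.map K N (MonoidHom.id G) hKN).isMulCommutative_of_isCyclic_of_ker_le_center
    fun x hx => ?_
  obtain ⟨y, rfl⟩ := QuotientGroup.mk'_surjective K x
  have hy : y ∈ N := (QuotientGroup.eq_one_iff y).mp hx
  simpa [upperCentralSeriesStep_eq_comap_center] using hN hy

theorem commutator_le_commutator_top_of_isCoatom {M : Subgroup G} (hM : IsCoatom M) :
    _root_.commutator G ≤ ⁅M, ⊤⁆ := by
  have := commutator_top_normal M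
  have hM_le : M ≤ upperCentralSeriesStep ⁅M, ⊤⁆ :=
    commutator_top_le_iff_le_upperCentralSeriesStep.mp le_rfl
  by_cases hKM : ⁅M, ⊤⁆ ≤ M
  · have : M.Normal := commutator_top_right_le_iff.mp hKM
    have := isCyclic_quotient_of_isCoatom hM
    exact commutator_le_of_isCyclic_quotient hKM hM_le
  · have hsup : M ⊔ ⁅M, ⊤⁆ = ⊤ := hM.2 _ (left_lt_sup.mpr hKM)
    have hK_le : ⁅M, (⊤ : Subgroup G)⁆ ≤ upperCentralSeriesStep ⁅M, ⊤⁆ :=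
      commutator_top_le_iff_le_upperCentralSeriesStep.mp (commutator_le_left _ _)
    rw [_root_.commutator_def, commutator_top_le_iff_le_upperCentralSeriesStep]
    exact hsup.ge.trans (sup_le hM_le hK_le)

theorem map_subtype_frattini_le_frattini (N : Subgroup G) [N.Normal] [IsCoatomic (Subgroup N)] :
    (frattini N).map N.subtype ≤ frattini G := by
  set Φ := (frattini N).map N.subtype
  refine le_iInf₂ fun M hM => ?_
  by_contra hΦM
  have hsup : Φ ⊔ M = ⊤ := hM.2 _ (right_lt_sup.mpr hΦM)
  have hΦN : Φ ≤ N := map_subtype_le _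
  -- Dedekind's modular law, using `Φ ≤ N`
  have hN : Φ ⊔ M ⊓ N = N := by
    apply SetLike.coe_injective
    rw [normal_mul, mul_inf_assoc _ _ _ hΦN, ← normal_mul, hsup, coe_top, Set.univ_inter]
  have hN' : (M ⊓ N).subgroupOf N ⊔ frattini N = ⊤ := by
    apply map_injective N.subtype_injective
    rw [map_sup, subgroupOf_map_subtype, ← MonoidHom.range_eq_map, range_subtype, inf_assoc,
      inf_idem, sup_comm, hN]
  have hNM : N ≤ M := by
    simpa [subgroupOf_eq_top] using frattini_nongenerating hN'
  exact hΦM (hΦN.trans hNM)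

theorem eq_bot_of_le_map_subtype_frattini {H : Subgroup G} [IsCoatomic (Subgroup H)]
    (h : H ≤ (frattini H).map H.subtype) : H = ⊥ := by
  have hΦ : frattini H = ⊤ := by
    rw [eq_top_iff]
    rintro x -
    obtain ⟨y, hy, hyx⟩ := h x.2
    exact H.subtype_injective hyx ▸ hy
  have hbot : (⊥ : Subgroup H) = ⊤ := frattini_nongenerating (by rw [hΦ, sup_top_eq])
  rw [← H.range_subtype, MonoidHom.range_eq_map, ← hbot, map_bot]

end Subgroup

theorem commutator_le_frattini_of_forall_isICPhi {G : Type*} [Group G] [Finite G]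
    (h : ∀ M : Subgroup G, IsCoatom M → IsICPhi M) : commutator G ≤ frattini G := by
  obtain hperfect | ⟨U, hU, hGU⟩ := eq_top_or_exists_le_coatom (commutator G)
  · refine le_iInf₂ fun M hM => absurd ?_ hM.1
    have hGM := commutator_le_commutator_top_of_isCoatom hM
    have hM_bot : M = ⊥ := eq_bot_of_le_map_subtype_frattini
      ((le_inf le_rfl (le_top.trans (hperfect.ge.trans hGM))).trans (h M hM))
    rwa [hM_bot, commutator_bot_left, hperfect, top_le_iff, ← hM_bot] at hGM
  · have : U.Normal := Normal.of_commutator_le G hGU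
    calc commutator G ≤ U ⊓ ⁅U, ⊤⁆ :=
          le_inf hGU (commutator_le_commutator_top_of_isCoatom hU)
      _ ≤ (frattini U).map U.subtype := h U hU
      _ ≤ frattini G := map_subtype_frattini_le_frattini U

theorem stmt12 {G : Type*} [Group G] [Finite G]
    (h : ∀ M : Subgroup G, IsCoatom M → IsICPhi M) : Group.IsNilpotent G := by
  refine (Group.isNilpotent_of_finite_tfae.out 0 2).mpr fun M hM => ?_
  exact Normal.of_commutator_le G
    ((commutator_le_frattini_of_forall_isICPhi h).trans (frattini_le_coatom hM))
end

section
/- Let G be a finite group such that every 3-maximal subgroup of G is an ICΦ-subgroup of G. Then G is solvable. -/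
/-- `H` is a `3`-maximal subgroup of `G` if there is a chain `H < M₁ < M₂ < G`
with each term maximal in the next. -/
def IsThreeMaximal {G : Type*} [Group G] (H : Subgroup G) : Prop :=
  ∃ M₁ M₂ : Subgroup G, IsCoatom M₂ ∧ M₁ ≤ M₂ ∧ IsCoatom (M₁.subgroupOf M₂) ∧
    H ≤ M₁ ∧ IsCoatom (H.subgroupOf M₁)

/-! Induct on `|G|`. The hypothesis passes to quotients, so for a minimal normal subgroup `N`
it remains to show that `N` is solvable. If `[N, G] < N`, then `N` is central. Otherwise every
`ICΦ`-subgroup `H ≤ N` is trivial: the normal subgroup `[H, G] ≤ N` is either trivial, making `H`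
normal, or equal to `N`, making `H ≤ H ∩ [H, G] ≤ Φ(H)`. If `N` lies in a 3-maximal subgroup `H`,
then `N = [N, G] ≤ Φ(H)` is nilpotent. Otherwise `N` has no chain `1 < A < B < N`, or, when
`N = G` is simple, `G` has no chain `1 < A < B < C < G`. A group of the first kind is a `p`-group
or has only cyclic Sylow subgroups. In a simple group of the second kind, a Sylow `p`-subgroup `P`
for the smallest prime `p` is either cyclic or self-normalizing and abelian, so `N(P) = C(P)` and
Burnside's transfer theorem embeds `G` into `P`. -/

open Subgroup
open scoped commutatorElement

section

variable {G Q : Type*} [Group G] [Group Q]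

theorem Subgroup.isCoatom_subgroupOf_iff_covBy {H M : Subgroup G} (h : H ≤ M) :
    IsCoatom (H.subgroupOf M) ↔ H ⋖ M := by
  rw [← covBy_top_iff, ← apply_covBy_apply_iff (MapSubtype.orderIso M),
    ← Set.OrdConnected.apply_covBy_apply_iff (OrderEmbedding.subtype fun K : Subgroup G => K ≤ M)
      (by simp only [OrderEmbedding.coe_subtype, Subtype.range_coe_subtype]
          exact Set.ordConnected_Iic)]
  simp [map_subgroupOf_eq_of_le h, ← MonoidHom.range_eq_map]

theorem isThreeMaximal_iff_covBy {H : Subgroup G} :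
    IsThreeMaximal H ↔ ∃ M₁ M₂ : Subgroup G, H ⋖ M₁ ∧ M₁ ⋖ M₂ ∧ M₂ ⋖ ⊤ := by
  simp only [IsThreeMaximal, covBy_top_iff]
  constructor
  · rintro ⟨M₁, M₂, hM₂, h₁₂, hM₁, hH₁, hH⟩
    exact ⟨M₁, M₂, (isCoatom_subgroupOf_iff_covBy hH₁).mp hH,
      (isCoatom_subgroupOf_iff_covBy h₁₂).mp hM₁, hM₂⟩
  · rintro ⟨M₁, M₂, hH, hM₁, hM₂⟩
    exact ⟨M₁, M₂, hM₂, hM₁.le, (isCoatom_subgroupOf_iff_covBy hM₁.le).mpr hM₁, hH.le,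
      (isCoatom_subgroupOf_iff_covBy hH.le).mpr hH⟩

theorem QuotientGroup.comap_mk'_covBy_comap_mk'_iff (N : Subgroup G) [N.Normal]
    {H K : Subgroup (G ⧸ N)} : H.comap (mk' N) ⋖ K.comap (mk' N) ↔ H ⋖ K := by
  rw [← apply_covBy_apply_iff (comapMk'OrderIso N)]
  exact Set.OrdConnected.apply_covBy_apply_iff (a := comapMk'OrderIso N H)
    (b := comapMk'OrderIso N K) (OrderEmbedding.subtype fun K : Subgroup G => N ≤ K)
    (by simp only [OrderEmbedding.coe_subtype, Subtype.range_coe_subtype]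
        exact Set.ordConnected_Ici)

open QuotientGroup in
theorem IsThreeMaximal.comap_mk' (N : Subgroup G) [N.Normal] {K : Subgroup (G ⧸ N)}
    (hK : IsThreeMaximal K) : IsThreeMaximal (K.comap (mk' N)) := by
  obtain ⟨M₁, M₂, hK₁, h₁₂, hM₂⟩ := isThreeMaximal_iff_covBy.mp hK
  refine isThreeMaximal_iff_covBy.mpr ⟨M₁.comap (mk' N), M₂.comap (mk' N),
    (comap_mk'_covBy_comap_mk'_iff N).mpr hK₁, (comap_mk'_covBy_comap_mk'_iff N).mpr h₁₂, ?_⟩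
  simpa using (comap_mk'_covBy_comap_mk'_iff N (K := ⊤)).mpr hM₂

theorem exists_isThreeMaximal_of_lt_of_lt [Finite G] {A B C : Subgroup G} (hAB : A < B)
    (hBC : B < C) (hC : C ≠ ⊤) : ∃ H, IsThreeMaximal H ∧ A ≤ H ∧ (C ≤ H ∨ H ≤ C) := by
  obtain ⟨M₂, hCM₂, hM₂⟩ := exists_le_covBy_of_lt (lt_top_iff_ne_top.mpr hC)
  rcases hCM₂.eq_or_lt with rfl | hCM₂
  · obtain ⟨M₁, hBM₁, hM₁⟩ := exists_le_covBy_of_lt hBC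
    obtain ⟨H, hAH, hH⟩ := exists_le_covBy_of_lt (hAB.trans_le hBM₁)
    exact ⟨H, isThreeMaximal_iff_covBy.mpr ⟨M₁, C, hH, hM₁, hM₂⟩, hAH,
      Or.inr (hH.le.trans hM₁.le)⟩
  obtain ⟨M₁, hCM₁, hM₁⟩ := exists_le_covBy_of_lt hCM₂
  rcases hCM₁.eq_or_lt with rfl | hCM₁
  · obtain ⟨H, hAH, hH⟩ := exists_le_covBy_of_lt (hAB.trans hBC)
    exact ⟨H, isThreeMaximal_iff_covBy.mpr ⟨C, M₂, hH, hM₁, hM₂⟩, hAH, Or.inr hH.le⟩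
  · obtain ⟨H, hCH, hH⟩ := exists_le_covBy_of_lt hCM₁
    exact ⟨H, isThreeMaximal_iff_covBy.mpr ⟨M₁, M₂, hH, hM₁, hM₂⟩,
      (hAB.trans hBC).le.trans hCH, Or.inl hCH⟩

theorem Subgroup.commutator_top_normal_s15 (H : Subgroup G) : ⁅H, (⊤ : Subgroup G)⁆.Normal := by
  refine ⟨fun x hx g => ?_⟩
  suffices ⁅H, ⊤⁆ ≤ (⁅H, ⊤⁆ : Subgroup G).comap (MulAut.conj g).toMonoidHom from this hx
  rw [commutator_le]
  intro h hh k _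
  have hconj : g * ⁅h, k⁆ * g⁻¹ = ⁅h, g⁆⁻¹ * ⁅h, g * k⁆ := by
    simp only [commutatorElement_def]
    group
  show g * ⁅h, k⁆ * g⁻¹ ∈ (⁅H, ⊤⁆ : Subgroup G)
  rw [hconj]
  exact mul_mem (inv_mem (commutator_mem_commutator hh (mem_top g)))
    (commutator_mem_commutator hh (mem_top (g * k)))

theorem Subgroup.map_inf_of_ker_le {f : G →* Q} {H : Subgroup G} (hH : f.ker ≤ H)
    (K : Subgroup G) : (H ⊓ K).map f = H.map f ⊓ K.map f := by
  refine le_antisymm (map_inf_le _ _ _) ?_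
  rintro _ ⟨⟨h, hh, rfl⟩, k, hk, hkh⟩
  refine ⟨k, ⟨?_, hk⟩, hkh⟩
  have hker : h⁻¹ * k ∈ f.ker := by simp [hkh]
  simpa using mul_mem hh (hH hker)

theorem IsICPhi.map {f : G →* Q} (hf : Function.Surjective f) {H : Subgroup G}
    (hker : f.ker ≤ H) (hH : IsICPhi H) : IsICPhi (H.map f) := by
  have hΦ : (frattini H).map (f.subgroupMap H) ≤ frattini (H.map f) :=
    map_le_iff_le_comap.mpr (frattini_le_comap_frattini_of_surjective (f.subgroupMap_surjective H))
  calc H.map f ⊓ ⁅H.map f, ⊤⁆ = (H ⊓ ⁅H, ⊤⁆).map f := by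
        rw [map_inf_of_ker_le hker, map_commutator, map_top_of_surjective f hf]
    _ ≤ ((frattini H).map H.subtype).map f := map_mono hH
    _ = ((frattini H).map (f.subgroupMap H)).map (H.map f).subtype := by
        simp only [Subgroup.map_map]
        rfl
    _ ≤ (frattini (H.map f)).map (H.map f).subtype := map_mono hΦ

theorem forall_isThreeMaximal_isICPhi_quotient
    (h : ∀ H : Subgroup G, IsThreeMaximal H → IsICPhi H) (N : Subgroup G) [N.Normal] :
    ∀ K : Subgroup (G ⧸ N), IsThreeMaximal K → IsICPhi K := by
  intro K hK
  have hK' := (h _ (hK.comap_mk' N)).map (QuotientGroup.mk'_surjective N) (ker_le_comap _ _)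
  rwa [map_comap_eq_self_of_surjective (QuotientGroup.mk'_surjective N)] at hK'

theorem Subgroup.isCyclic_of_forall_lt_eq_bot {P : Subgroup G} (h : ∀ A < P, A = ⊥) :
    IsCyclic P := by
  obtain rfl | ⟨x, hxP, hx⟩ := P.bot_or_exists_ne_one
  · infer_instance
  have hxP' : zpowers x = P := (zpowers_le.mpr hxP).eq_of_not_lt fun hlt =>
    hx (zpowers_eq_bot.mp (h _ hlt))
  exact hxP' ▸ isCyclic_zpowers x

theorem Subgroup.forall_lt_lt_top_of_forall_lt_lt {N : Subgroup G}
    (h : ∀ A B : Subgroup G, A < B → B < N → A = ⊥) :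
    ∀ A B : Subgroup N, A < B → B < ⊤ → A = ⊥ := by
  intro A B hAB hB
  rw [← map_subtype_lt_map_subtype] at hAB hB
  rw [← (map_injective N.subtype_injective).eq_iff, Subgroup.map_bot]
  exact h _ _ hAB (by simpa [← MonoidHom.range_eq_map] using hB)

theorem Sylow.isPGroup_of_eq_top {p : ℕ} (P : Sylow p G) (hP : (P : Subgroup G) = ⊤) :
    IsPGroup p G :=
  P.isPGroup'.of_equiv ((MulEquiv.subgroupCongr hP).trans topEquiv)

abbrev Subgroup.IsMinimalNormal (N : Subgroup G) : Prop :=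
  Minimal (fun K : Subgroup G => K.Normal ∧ K ≠ ⊥) N

theorem Subgroup.IsMinimalNormal.isSolvable_of_commutator_ne {N : Subgroup G}
    (hN : N.IsMinimalNormal) (hNG : ⁅N, (⊤ : Subgroup G)⁆ ≠ N) : Group.IsSolvable N := by
  have := hN.1.1
  have hbot : ⁅N, (⊤ : Subgroup G)⁆ = ⊥ := by
    by_contra hne
    exact hNG (le_antisymm (commutator_le_left N ⊤) (hN.2 ⟨commutator_top_normal_s15 N, hne⟩
      (commutator_le_left N ⊤)))
  have hcomm : N ≤ centralizer N :=
    (commutator_eq_bot_iff_le_centralizer.mp hbot).trans (centralizer_le (Set.subset_univ _))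
  have := le_centralizer_iff_isMulCommutative.mp hcomm
  exact Group.isSolvable_of_comm Std.Commutative.comm

variable [Finite G]

theorem IsICPhi.eq_bot_of_le_commutator {H : Subgroup G} (hH : IsICPhi H)
    (hle : H ≤ ⁅H, ⊤⁆) : H = ⊥ := by
  have hΦ : frattini H = ⊤ := by
    rw [eq_top_iff, ← map_subtype_le_map_subtype, ← MonoidHom.range_eq_map, range_subtype]
    exact (le_inf le_rfl hle).trans hH
  have hbot : (⊥ : Subgroup H) = ⊤ := frattini_nongenerating (by rw [hΦ, sup_top_eq])
  rw [← range_subtype H, MonoidHom.range_eq_map, ← hbot, Subgroup.map_bot]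

theorem IsICPhi.isSolvable_of_le {H N : Subgroup G} (hH : IsICPhi H) (hNH : N ≤ H)
    (hN : N ≤ ⁅N, ⊤⁆) : Group.IsSolvable N := by
  have hle : N ≤ (frattini H).map H.subtype :=
    (le_inf hNH (hN.trans (commutator_mono hNH le_rfl))).trans hH
  have := frattini_nilpotent (G := H)
  let e := (frattini H).equivMapOfInjective _ H.subtype_injective
  have : Group.IsSolvable ((frattini H).map H.subtype) :=
    Group.isSolvable_of_surjective (f := (e : frattini H →* _)) e.surjective
  exact Group.isSolvable_of_isSolvable_injective (inclusion_injective hle)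

theorem IsPGroup.commute_of_forall_lt_lt_top {p : ℕ} [Fact p.Prime] (hG : IsPGroup p G)
    (h : ∀ A B : Subgroup G, A < B → B < ⊤ → A = ⊥) (a b : G) : Commute a b := by
  by_contra hab
  have : Nontrivial G := nontrivial_of_ne _ _ hab
  have : Nontrivial (center G) := hG.center_nontrivial
  refine (nontrivial_iff_ne_bot _).mp this (h _ (centralizer {a}) ?_ ?_)
  · refine (center_le_centralizer _).lt_of_ne fun heq => hab ?_
    have ha : a ∈ center G := heq ▸ mem_centralizer_singleton_iff.mpr rfl
    exact (mem_center_iff.mp ha b).symm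
  · exact lt_top_iff_ne_top.mpr fun heq =>
      hab (mem_centralizer_singleton_iff.mp (heq ▸ mem_top b)).symm

theorem isSolvable_of_forall_lt_lt_top (h : ∀ A B : Subgroup G, A < B → B < ⊤ → A = ⊥) :
    Group.IsSolvable G := by
  by_cases hG : ∃ p, ∃ _ : Fact p.Prime, ∃ P : Sylow p G, (P : Subgroup G) = ⊤
  · obtain ⟨p, _, P, hP⟩ := hG
    have := (P.isPGroup_of_eq_top hP).isNilpotent
    infer_instance
  push Not at hG
  have : IsZGroup G := by
    refine ⟨fun p hp P => isCyclic_of_forall_lt_eq_bot fun A hA => h A P hA ?_⟩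
    exact lt_top_iff_ne_top.mpr (hG p ⟨hp⟩ P)
  infer_instance

theorem isSolvable_of_isSimpleGroup_of_forall_lt_lt_lt_top [IsSimpleGroup G]
    (h : ∀ A B C : Subgroup G, A < B → B < C → C < ⊤ → A = ⊥) : Group.IsSolvable G := by
  set p := (Nat.card G).minFac with hp
  have : Fact p.Prime := ⟨Nat.minFac_prime Finite.one_lt_card.ne'⟩
  let P : Sylow p G := default
  by_cases hPtop : (P : Subgroup G) = ⊤
  · have := (P.isPGroup_of_eq_top hPtop).isNilpotent
    infer_instance
  have hPlt := lt_top_iff_ne_top.mpr hPtop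
  have hPC : normalizer (P : Set G) ≤ centralizer (P : Set G) := by
    rcases (le_normalizer (H := (P : Subgroup G))).eq_or_lt with heq | hlt
    · refine heq.ge.trans (le_centralizer_iff_isMulCommutative.mpr ?_)
      have hP := P.isPGroup'.commute_of_forall_lt_lt_top
        (forall_lt_lt_top_of_forall_lt_lt fun A B hAB hBP => h A B P hAB hBP hPlt)
      exact ⟨⟨fun a b => hP a b⟩⟩
    · refine IsCyclic.normalizer_le_centralizer hp.symm
        (isCyclic_of_forall_lt_eq_bot fun A hA => ?_)
      rcases eq_top_or_lt_top (normalizer (P : Set G)) with htop | hNlt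
      · have hPbot := ((normalizer_eq_top_iff.mp htop).eq_bot_or_eq_top).resolve_right hPtop
        exact absurd (hPbot ▸ hA) not_lt_bot
      · exact h A P _ hA hlt hNlt
  have hker := (MonoidHom.transferSylow P hPC).normal_ker.eq_bot_or_eq_top.resolve_right
    fun htop => MonoidHom.not_dvd_card_ker_transferSylow P hPC (by
      rw [htop, card_top]
      exact Nat.minFac_dvd _)
  have : IsMulCommutative P := le_centralizer_iff_isMulCommutative.mp (le_normalizer.trans hPC)
  have : Group.IsSolvable P := Group.isSolvable_of_comm Std.Commutative.comm
  exact Group.isSolvable_of_isSolvable_injective ((MonoidHom.ker_eq_bot_iff _).mp hker)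

theorem IsICPhi.eq_bot_of_le_of_isMinimalNormal {N : Subgroup G} (hN : N.IsMinimalNormal)
    (hNG : ⁅N, (⊤ : Subgroup G)⁆ = N) {H : Subgroup G} (hH : IsICPhi H) (hHN : H ≤ N) :
    H = ⊥ := by
  have hHG : ⁅H, (⊤ : Subgroup G)⁆ ≤ N := hNG ▸ commutator_mono hHN le_rfl
  by_cases hbot : ⁅H, (⊤ : Subgroup G)⁆ = ⊥
  · have hHnormal : H.Normal := commutator_top_right_le_iff.mp (hbot ▸ bot_le)
    by_contra hne
    have hHeq : H = N := le_antisymm hHN (hN.2 ⟨hHnormal, hne⟩ hHN)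
    exact hN.1.2 (hNG ▸ hHeq ▸ hbot)
  · exact hH.eq_bot_of_le_commutator (hHN.trans (hN.2 ⟨commutator_top_normal_s15 H, hbot⟩ hHG))

theorem Subgroup.IsMinimalNormal.isSolvable_of_forall_isThreeMaximal_isICPhi
    {N : Subgroup G} (hN : N.IsMinimalNormal)
    (h : ∀ H : Subgroup G, IsThreeMaximal H → IsICPhi H) : Group.IsSolvable N := by
  by_cases hNG : ⁅N, (⊤ : Subgroup G)⁆ = N
  swap
  · exact hN.isSolvable_of_commutator_ne hNG
  have key (H : Subgroup G) (hH : IsThreeMaximal H) (hHN : H ≤ N) : H = ⊥ :=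
    (h H hH).eq_bot_of_le_of_isMinimalNormal hN hNG hHN
  rcases eq_or_ne N ⊤ with rfl | hNtop
  · have : Nontrivial G := nontrivial_iff.mp (nontrivial_of_ne _ _ hN.1.2)
    have : IsSimpleGroup G := ⟨fun K hK =>
      or_iff_not_imp_left.mpr fun hK' => top_le_iff.mp (hN.2 ⟨hK, hK'⟩ le_top)⟩
    have : Group.IsSolvable G :=
      isSolvable_of_isSimpleGroup_of_forall_lt_lt_lt_top fun A B C hAB hBC hC => by
        obtain ⟨H, hH, hAH, -⟩ := exists_isThreeMaximal_of_lt_of_lt hAB hBC hC.ne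
        exact le_bot_iff.mp (key H hH le_top ▸ hAH)
    infer_instance
  by_cases hdeep : ∃ H, IsThreeMaximal H ∧ N ≤ H
  · obtain ⟨H, hH, hNH⟩ := hdeep
    exact (h H hH).isSolvable_of_le hNH hNG.ge
  push Not at hdeep
  refine isSolvable_of_forall_lt_lt_top (forall_lt_lt_top_of_forall_lt_lt fun A B hAB hBN => ?_)
  obtain ⟨H, hH, hAH, hNH | hHN⟩ := exists_isThreeMaximal_of_lt_of_lt hAB hBN hNtop
  · exact absurd hNH (hdeep H hH)
  · exact le_bot_iff.mp (key H hH hHN ▸ hAH)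

theorem Subgroup.card_quotient_lt {N : Subgroup G} (hN : N ≠ ⊥) :
    Nat.card (G ⧸ N) < Nat.card G := by
  rw [card_eq_card_quotient_mul_card_subgroup N]
  exact lt_mul_of_one_lt_right Nat.card_pos ((one_lt_card_iff_ne_bot N).mpr hN)

end

theorem stmt15 {G : Type*} [Group G] [Finite G]
    (h : ∀ H : Subgroup G, IsThreeMaximal H → IsICPhi H) : IsSolvable G := by
  induction hn : Nat.card G using Nat.strong_induction_on generalizing G with
  | _ n ih =>
  show Group.IsSolvable G
  obtain _ | _ := subsingleton_or_nontrivial G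
  · infer_instance
  obtain ⟨N, hN⟩ : ∃ N : Subgroup G, N.IsMinimalNormal :=
    exists_minimal_of_wellFoundedLT _ ⟨⊤, inferInstance, top_ne_bot⟩
  have := hN.1.1
  have : Group.IsSolvable (G ⧸ N) := ih _ (hn ▸ card_quotient_lt hN.1.2)
    (forall_isThreeMaximal_isICPhi_quotient h N) rfl
  have := hN.isSolvable_of_forall_isThreeMaximal_isICPhi h
  exact Group.isSolvable_of_ker_le_range N.subtype (QuotientGroup.mk' N) (by simp)
end
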